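/- arXiv:2012.11484 — 5 statements merged into one kernel-verified Lean document; each statement's English description precedes it below -/
import Mathlib

section
/- Let G = (V,E) be a finite tree rooted at o, and let (a_e)_{e∈E} be positive reals. Then for every function g : E → ℝ, ∑_{v∈V} (∑_{e∈ℓ(v)} g(e))² ≤ max_{e∈E} [a_e^{-1} ∑_{v∈T_e} ∑_{ẽ∈ℓ(v)} a_{ẽ}] · ∑_{e∈E} g(e)². -/
open Finset

/-- Edges on the path from `o` to `v` in a tree, encoded by their endpoints farther
from `o`: the vertices `u ≠ o` lying on the path from `o` to `v`. -/
noncomputable def pathE {V : Type*} [Fintype V] [DecidableEq V] (G : SimpleGraph V) (o v : V) :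
    Finset V :=
  Finset.univ.filter fun u => u ≠ o ∧ G.dist o u + G.dist u v = G.dist o v

/-- The vertex set `T_e` of the subtree hanging below the edge `e` encoded by `u`:
all vertices whose root-path passes through `u`. -/
noncomputable def subT {V : Type*} [Fintype V] [DecidableEq V] (G : SimpleGraph V) (o u : V) :
    Finset V :=
  Finset.univ.filter fun x => u ∈ pathE G o x

/-!
Cauchy–Schwarz with weights `a` bounds `(∑_{e ∈ ℓ(v)} g e)²` by
`(∑_{e ∈ ℓ(v)} a e) · ∑_{e ∈ ℓ(v)} g e² / a e`. Summing over `v` and exchanging the order of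
summation, the coefficient of `g e²` becomes `a_e⁻¹ ∑_{v ∈ T_e} ∑_{ẽ ∈ ℓ(v)} a_ẽ`, which is at
most the maximum. Only the incidence relation between vertices and path edges matters.
-/

theorem Finset.sq_sum_le_sum_mul_sum_sq_div {ι : Type*} (s : Finset ι) (g : ι → ℝ)
    {a : ι → ℝ} (ha : ∀ i ∈ s, 0 < a i) :
    (∑ i ∈ s, g i) ^ 2 ≤ (∑ i ∈ s, a i) * ∑ i ∈ s, g i ^ 2 / a i :=
  sum_sq_le_sum_mul_sum_of_sq_le_mul s (fun i hi => (ha i hi).le)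
    (fun i hi => div_nonneg (sq_nonneg _) (ha i hi).le)
    (fun i hi => (mul_div_cancel₀ _ (ha i hi).ne').ge)

theorem Finset.sum_sq_sum_le_mul_sum_sq {ι κ : Type*} [Fintype ι] [DecidableEq κ]
    (P : ι → Finset κ) {s : Finset κ} (hP : ∀ i, P i ⊆ s) {a : κ → ℝ} (ha : ∀ k ∈ s, 0 < a k)
    (g : κ → ℝ) {M : ℝ}
    (hM : ∀ k ∈ s, (a k)⁻¹ * ∑ i ∈ univ.filter (k ∈ P ·), ∑ j ∈ P i, a j ≤ M) :
    ∑ i, (∑ k ∈ P i, g k) ^ 2 ≤ M * ∑ k ∈ s, g k ^ 2 :=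
  calc ∑ i, (∑ k ∈ P i, g k) ^ 2
      ≤ ∑ i, ∑ k ∈ P i, (∑ j ∈ P i, a j) * (g k ^ 2 / a k) := by
        refine sum_le_sum fun i _ => ?_
        rw [← mul_sum]
        exact sq_sum_le_sum_mul_sum_sq_div _ g fun k hk => ha k (hP i hk)
    _ = ∑ k ∈ s, ∑ i ∈ univ.filter (k ∈ P ·), (∑ j ∈ P i, a j) * (g k ^ 2 / a k) :=
        sum_comm' fun i k => by simpa using fun hk => hP i hk
    _ = ∑ k ∈ s, g k ^ 2 * ((a k)⁻¹ * ∑ i ∈ univ.filter (k ∈ P ·), ∑ j ∈ P i, a j) := by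
        refine sum_congr rfl fun k _ => ?_
        rw [← sum_mul]
        ring
    _ ≤ ∑ k ∈ s, g k ^ 2 * M := by
        gcongr with k hk
        exact hM k hk
    _ = M * ∑ k ∈ s, g k ^ 2 := by rw [← sum_mul, mul_comm]

theorem weighted_hardy_on_trees_general {V : Type*} [Fintype V] [DecidableEq V]
    (G : SimpleGraph V) (o : V) (a : V → ℝ)
    (ha : ∀ u, u ≠ o → 0 < a u)
    (hE : (Finset.univ.filter fun u => u ≠ o).Nonempty) (g : V → ℝ) :
    ∑ v : V, (∑ u ∈ pathE G o v, g u) ^ 2 ≤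
      ((Finset.univ.filter fun u => u ≠ o).sup' hE fun u =>
          (a u)⁻¹ * ∑ x ∈ subT G o u, ∑ w ∈ pathE G o x, a w) *
        ∑ u ∈ Finset.univ.filter fun u => u ≠ o, (g u) ^ 2 :=
  sum_sq_sum_le_mul_sum_sq (pathE G o)
    (fun _ _ hu => mem_filter.mpr ⟨mem_univ _, (mem_filter.mp hu).2.1⟩)
    (fun u hu => ha u (mem_filter.mp hu).2) g
    (fun _ hu => le_sup' (fun u => (a u)⁻¹ * ∑ x ∈ subT G o u, ∑ w ∈ pathE G o x, a w) hu)

/-- Weighted discrete Hardy inequality on trees: for any positive edge weights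
`a` and any `g : E → ℝ`,
`∑_v (∑_{e ∈ ℓ(v)} g(e))² ≤ max_e [a_e⁻¹ ∑_{v ∈ T_e} ∑_{ẽ ∈ ℓ(v)} a_ẽ] · ∑_e g(e)²`. -/
theorem weighted_hardy_on_trees {V : Type*} [Fintype V] [DecidableEq V]
    (G : SimpleGraph V) (hG : G.IsTree) (o : V) (a : V → ℝ)
    (ha : ∀ u, u ≠ o → 0 < a u)
    (hE : (Finset.univ.filter fun u => u ≠ o).Nonempty) (g : V → ℝ) :
    ∑ v : V, (∑ u ∈ pathE G o v, g u) ^ 2 ≤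
      ((Finset.univ.filter fun u => u ≠ o).sup' hE fun u =>
          (a u)⁻¹ * ∑ x ∈ subT G o u, ∑ w ∈ pathE G o x, a w) *
        ∑ u ∈ Finset.univ.filter fun u => u ≠ o, (g u) ^ 2 :=
  weighted_hardy_on_trees_general G o a ha hE g
end

section
/- Let G be a finite tree rooted at o and let g : E(G) → ℝ. Then ∑_{v∈V(G)} (∑_{e∈ℓ(v)} g(e))² ≤ (∑_{k=1}^{D} 1/k) · max_{e∈E}(|e|·|T_e|) · ∑_{e∈E} g(e)², where D = max_v |v|, |e| is the distance of the far endpoint of e from o, and |T_e| is the size of the subtree below e. -/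
open Finset

/-- In a tree, two vertices lying on geodesics from `o` to `v` at equal distance from `o`
coincide. -/
lemma tree_geodesic_inj {V : Type*} {G : SimpleGraph V} (hG : G.IsTree)
    {o v u u' : V}
    (hu : G.dist o u + G.dist u v = G.dist o v)
    (hu' : G.dist o u' + G.dist u' v = G.dist o v)
    (hd : G.dist o u = G.dist o u') : u = u' := by
  have hconn := hG.isConnected
  obtain ⟨p1, hp1p, hp1⟩ := hconn.exists_path_of_dist o u
  obtain ⟨q1, hq1p, hq1⟩ := hconn.exists_path_of_dist u v
  obtain ⟨p2, hp2p, hp2⟩ := hconn.exists_path_of_dist o u'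
  obtain ⟨q2, hq2p, hq2⟩ := hconn.exists_path_of_dist u' v
  have hw1 : (p1.append q1).length = G.dist o v := by
    rw [SimpleGraph.Walk.length_append, hp1, hq1, hu]
  have hw2 : (p2.append q2).length = G.dist o v := by
    rw [SimpleGraph.Walk.length_append, hp2, hq2, hu']
  have hP1 := (p1.append q1).isPath_of_length_eq_dist hw1
  have hP2 := (p2.append q2).isPath_of_length_eq_dist hw2
  have heq : p1.append q1 = p2.append q2 :=
    ((hG.existsUnique_path o v).unique hP1 hP2)
  have h1 : (p1.append q1).getVert (G.dist o u) = u := by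
    rw [SimpleGraph.Walk.getVert_append]
    simp [hp1]
  have h2 : (p2.append q2).getVert (G.dist o u) = u' := by
    rw [SimpleGraph.Walk.getVert_append, hd]
    simp [hp2]
  rw [← h1, heq, h2]

/-- Hardy inequality with weights `a_e = 1/|e|`: with `D = max_v |v|`,
`∑_v (∑_{e ∈ ℓ(v)} g(e))² ≤ (∑_{k=1}^D 1/k) · max_e (|e|·|T_e|) · ∑_e g(e)²`. -/
theorem hardy_log_diameter_bound {V : Type*} [Fintype V] [DecidableEq V]
    (G : SimpleGraph V) (hG : G.IsTree) (o : V)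
    (hE : (Finset.univ.filter fun u => u ≠ o).Nonempty) (g : V → ℝ) :
    ∑ v : V, (∑ u ∈ pathE G o v, g u) ^ 2 ≤
      (∑ k ∈ Finset.Icc 1 (Finset.univ.sup (G.dist o)), (1 : ℝ) / k) *
        ((Finset.univ.filter fun u => u ≠ o).sup' hE fun u =>
          ((G.dist o u * (subT G o u).card : ℕ) : ℝ)) *
        ∑ u ∈ Finset.univ.filter fun u => u ≠ o, (g u) ^ 2 := by
  classical
  have hconn := hG.isConnected
  set D := Finset.univ.sup (G.dist o) with hD
  set H : ℝ := ∑ k ∈ Finset.Icc 1 D, (1 : ℝ) / k with hHdef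
  set M : ℝ := (Finset.univ.filter fun u => u ≠ o).sup' hE fun u =>
      ((G.dist o u * (subT G o u).card : ℕ) : ℝ) with hMdef
  -- positivity of distance on paths
  have hdpos : ∀ {v u : V}, u ∈ pathE G o v → 0 < G.dist o u := by
    intro v u hu
    rw [pathE, Finset.mem_filter] at hu
    have := SimpleGraph.dist_ne_zero_iff_ne_and_reachable.mpr
      ⟨Ne.symm hu.2.1, hconn.preconnected o u⟩
    omega
  have hH0 : 0 ≤ H := by
    apply Finset.sum_nonneg
    intro k _
    positivity
  -- Step B : harmonic bound along each path
  have stepB : ∀ v : V, ∑ u ∈ pathE G o v, (1 : ℝ) / (G.dist o u) ≤ H := by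
    intro v
    have hinj : Set.InjOn (G.dist o) (pathE G o v) := by
      intro a ha b hb hab
      simp only [Finset.mem_coe, pathE, Finset.mem_filter] at ha hb
      exact tree_geodesic_inj hG ha.2.2 hb.2.2 hab
    rw [← Finset.sum_image (f := fun k : ℕ => (1 : ℝ) / k) (fun a ha b hb h => hinj ha hb h)]
    apply Finset.sum_le_sum_of_subset_of_nonneg
    · intro k hk
      rw [Finset.mem_image] at hk
      obtain ⟨u, hu, rfl⟩ := hk
      rw [Finset.mem_Icc]
      exact ⟨hdpos hu, Finset.le_sup (Finset.mem_univ u)⟩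
    · intro k _ _
      positivity
  -- Step A : Cauchy–Schwarz along each path
  have stepA : ∀ v : V, (∑ u ∈ pathE G o v, g u) ^ 2 ≤
      H * ∑ u ∈ pathE G o v, (G.dist o u : ℝ) * g u ^ 2 := by
    intro v
    have hcs := Finset.sum_mul_sq_le_sq_mul_sq (pathE G o v)
      (fun u => Real.sqrt (1 / (G.dist o u : ℝ)))
      (fun u => Real.sqrt (G.dist o u : ℝ) * g u)
    have h1 : ∀ u ∈ pathE G o v,
        Real.sqrt (1 / (G.dist o u : ℝ)) * (Real.sqrt (G.dist o u : ℝ) * g u) = g u := by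
      intro u hu
      have hp : (0 : ℝ) < (G.dist o u : ℝ) := by exact_mod_cast hdpos hu
      rw [← mul_assoc, ← Real.sqrt_mul (by positivity), one_div,
        inv_mul_cancel₀ hp.ne', Real.sqrt_one, one_mul]
    rw [Finset.sum_congr rfl h1] at hcs
    refine hcs.trans ?_
    have h2 : ∑ u ∈ pathE G o v, Real.sqrt (1 / (G.dist o u : ℝ)) ^ 2
        = ∑ u ∈ pathE G o v, (1 : ℝ) / (G.dist o u : ℝ) := by
      refine Finset.sum_congr rfl fun u hu => ?_
      rw [Real.sq_sqrt (by positivity)]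
    have h3 : ∑ u ∈ pathE G o v, (Real.sqrt (G.dist o u : ℝ) * g u) ^ 2
        = ∑ u ∈ pathE G o v, (G.dist o u : ℝ) * g u ^ 2 := by
      refine Finset.sum_congr rfl fun u hu => ?_
      rw [mul_pow, Real.sq_sqrt (by positivity)]
    rw [h2, h3]
    have h4 : 0 ≤ ∑ u ∈ pathE G o v, (G.dist o u : ℝ) * g u ^ 2 :=
      Finset.sum_nonneg fun u _ => by positivity
    exact mul_le_mul_of_nonneg_right (stepB v) h4
  -- sum over v and swap the order of summation
  have swap : ∑ v : V, ∑ u ∈ pathE G o v, (G.dist o u : ℝ) * g u ^ 2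
      = ∑ u : V, ((subT G o u).card : ℝ) * ((G.dist o u : ℝ) * g u ^ 2) := by
    have e1 : ∀ v : V, ∑ u ∈ pathE G o v, (G.dist o u : ℝ) * g u ^ 2
        = ∑ u : V, if u ∈ pathE G o v then (G.dist o u : ℝ) * g u ^ 2 else 0 := by
      intro v
      rw [Finset.sum_ite_mem, Finset.univ_inter]
    rw [Finset.sum_congr rfl fun v _ => e1 v, Finset.sum_comm]
    refine Finset.sum_congr rfl fun u _ => ?_
    rw [← Finset.sum_filter, Finset.sum_const, nsmul_eq_mul]
    congr 2
  calc ∑ v : V, (∑ u ∈ pathE G o v, g u) ^ 2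
      ≤ ∑ v : V, H * ∑ u ∈ pathE G o v, (G.dist o u : ℝ) * g u ^ 2 :=
        Finset.sum_le_sum fun v _ => stepA v
    _ = H * ∑ u : V, ((subT G o u).card : ℝ) * ((G.dist o u : ℝ) * g u ^ 2) := by
        rw [← Finset.mul_sum, swap]
    _ = H * ∑ u ∈ Finset.univ.filter fun u => u ≠ o,
          ((G.dist o u * (subT G o u).card : ℕ) : ℝ) * g u ^ 2 := by
        congr 1
        have h0 : ∀ x ∈ (Finset.univ : Finset V),
            x ∉ (Finset.univ.filter fun u => u ≠ o) →
            ((subT G o x).card : ℝ) * ((G.dist o x : ℝ) * g x ^ 2) = 0 := by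
          intro x _ hx
          simp only [Finset.mem_filter, Finset.mem_univ, true_and, not_not] at hx
          have hsub : subT G o x = ∅ := by
            ext y
            simp [subT, pathE, hx]
          rw [hsub]
          simp
        rw [← Finset.sum_subset (Finset.filter_subset (fun u => u ≠ o) Finset.univ) h0]
        refine Finset.sum_congr rfl fun u _ => ?_
        push_cast
        ring
    _ ≤ H * (M * ∑ u ∈ Finset.univ.filter fun u => u ≠ o, g u ^ 2) := by
        refine mul_le_mul_of_nonneg_left ?_ hH0
        rw [Finset.mul_sum]
        refine Finset.sum_le_sum fun u hu => ?_
        exact mul_le_mul_of_nonneg_right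
          (Finset.le_sup' (fun u => ((G.dist o u * (subT G o u).card : ℕ) : ℝ)) hu)
          (sq_nonneg _)
    _ = H * M * ∑ u ∈ Finset.univ.filter fun u => u ≠ o, g u ^ 2 := by ring
end

section
/- Let G be a finite tree rooted at o and g : E(G) → ℝ. Then ∑_{v∈V(G)} (∑_{e∈ℓ(v)} g(e))² ≤ (max_{v∈V} ∑_{e∈ℓ(v)} |T_e|) · ∑_{e∈E} g(e)². -/
open Finset

section WeightedHardy

variable {ι κ : Type*} [Fintype ι] [DecidableEq κ]

theorem sq_sum_le_sum_card_mul_sum_sq_div (ℓ : ι → Finset κ) (g : κ → ℝ) (i : ι) :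
    (∑ e ∈ ℓ i, g e) ^ 2 ≤
      (∑ e ∈ ℓ i, (#{j | e ∈ ℓ j} : ℝ)) * ∑ e ∈ ℓ i, g e ^ 2 / #{j | e ∈ ℓ j} := by
  refine sum_sq_le_sum_mul_sum_of_sq_le_mul _ (fun _ _ => by positivity)
    (fun _ _ => by positivity) fun e he => ?_
  have hpos : (0 : ℝ) < #{j | e ∈ ℓ j} := by
    exact_mod_cast card_pos.2 ⟨i, mem_filter.2 ⟨mem_univ i, he⟩⟩
  rw [mul_div_cancel₀ _ hpos.ne']

theorem sum_sum_eq_sum_card_nsmul {M : Type*} [AddCommMonoid M] (ℓ : ι → Finset κ)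
    (s : Finset κ) (hs : ∀ i, ℓ i ⊆ s) (f : κ → M) :
    ∑ i, ∑ e ∈ ℓ i, f e = ∑ e ∈ s, #{j | e ∈ ℓ j} • f e := by
  rw [sum_comm' (t' := s) (s' := fun e => {j | e ∈ ℓ j})]
  · simp only [sum_const]
  · intro i e
    simp only [mem_univ, true_and, mem_filter]
    exact ⟨fun he => ⟨he, hs i he⟩, And.left⟩

theorem sum_sq_sum_le_sup_mul_sum_sq (ℓ : ι → Finset κ) (s : Finset κ) (hs : ∀ i, ℓ i ⊆ s)
    (g : κ → ℝ) :
    ∑ i, (∑ e ∈ ℓ i, g e) ^ 2 ≤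
      ((univ.sup fun i => ∑ e ∈ ℓ i, #{j | e ∈ ℓ j} : ℕ) : ℝ) * ∑ e ∈ s, g e ^ 2 := by
  set M : ℕ := univ.sup fun i => ∑ e ∈ ℓ i, #{j | e ∈ ℓ j}
  have hM : ∀ i, ∑ e ∈ ℓ i, (#{j | e ∈ ℓ j} : ℝ) ≤ M := fun i => by
    exact_mod_cast le_sup (f := fun i => ∑ e ∈ ℓ i, #{j | e ∈ ℓ j}) (mem_univ i)
  calc ∑ i, (∑ e ∈ ℓ i, g e) ^ 2
      ≤ ∑ i, (M : ℝ) * ∑ e ∈ ℓ i, g e ^ 2 / #{j | e ∈ ℓ j} := by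
        gcongr with i
        exact (sq_sum_le_sum_card_mul_sum_sq_div ℓ g i).trans
          (mul_le_mul_of_nonneg_right (hM i) (sum_nonneg fun _ _ => by positivity))
    _ = M * ∑ e ∈ s, #{j | e ∈ ℓ j} • (g e ^ 2 / #{j | e ∈ ℓ j}) := by
        rw [← mul_sum, sum_sum_eq_sum_card_nsmul ℓ s hs]
    _ ≤ M * ∑ e ∈ s, g e ^ 2 := by
        gcongr with e
        rw [nsmul_eq_mul]
        -- an `e ∈ s` on no path has weight `0`, and then `0 * (x / 0) = 0`
        obtain hw | hw := eq_or_ne (#{j | e ∈ ℓ j} : ℝ) 0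
        · rw [hw, zero_mul]
          positivity
        · rw [mul_div_cancel₀ _ hw]

end WeightedHardy

theorem hardy_subtree_weights_general {V : Type*} [Fintype V] [DecidableEq V]
    (G : SimpleGraph V) (o : V) (g : V → ℝ) :
    ∑ v : V, (∑ u ∈ pathE G o v, g u) ^ 2 ≤
      ((Finset.univ.sup fun v => ∑ u ∈ pathE G o v, (subT G o u).card : ℕ) : ℝ) *
        ∑ u ∈ Finset.univ.filter fun u => u ≠ o, (g u) ^ 2 :=
  sum_sq_sum_le_sup_mul_sum_sq (pathE G o) _
    (fun _ _ hu => mem_filter.2 ⟨mem_univ _, (mem_filter.1 hu).2.1⟩) g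

/-- Hardy inequality with weights `a_e = |T_e|`:
`∑_v (∑_{e ∈ ℓ(v)} g(e))² ≤ (max_v ∑_{e ∈ ℓ(v)} |T_e|) · ∑_e g(e)²`. -/
theorem hardy_subtree_weights {V : Type*} [Fintype V] [DecidableEq V]
    (G : SimpleGraph V) (hG : G.IsTree) (o : V) (g : V → ℝ) :
    ∑ v : V, (∑ u ∈ pathE G o v, g u) ^ 2 ≤
      ((Finset.univ.sup fun v => ∑ u ∈ pathE G o v, (subT G o u).card : ℕ) : ℝ) *
        ∑ u ∈ Finset.univ.filter fun u => u ≠ o, (g u) ^ 2 :=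
  hardy_subtree_weights_general G o g
end

section
/- Let G be a finite tree rooted at o and let e* be an edge maximizing |e|·|T_e|. Define g(e) = 1/|e*| for e on the root-path of the far endpoint of e*, and g(e) = 0 otherwise. Then ∑_{v∈V} (∑_{e∈ℓ(v)} g(e))² ≥ |T_{e*}| and ∑_{e∈E} g(e)² = 1/|e*|. Consequently, the best constant A in the Hardy inequality ∑_v (∑_{e∈ℓ(v)} g(e))² ≤ A ∑_e g(e)² satisfies A ≥ max_{e∈E} |e|·|T_e|. -/
/- The test function `g = c · 1_{ℓ(e*)}` sums to `|e*| c` along the root-path of every vertex of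
`T_{e*}`, because that path contains `ℓ(e*)`, while its energy is `|e*| c²`. With `c = 1/|e*|`
the left side of the Hardy inequality is at least `|T_{e*}|` and the right side is `A / |e*|`. -/

open Finset

section Tree

variable {V : Type*} [Fintype V] [DecidableEq V] {G : SimpleGraph V}

lemma mem_pathE_iff_mem_support (hG : G.IsTree) {o v u : V} (p : G.Walk o v)
    (hp : p.IsPath) (hl : p.length = G.dist o v) :
    u ∈ pathE G o v ↔ u ≠ o ∧ u ∈ p.support := by
  simp only [pathE, mem_filter, mem_univ, true_and, and_congr_right_iff]
  intro _
  constructor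
  · intro hdist
    obtain ⟨q₁, hq₁⟩ := hG.connected.exists_walk_length_eq_dist o u
    obtain ⟨q₂, hq₂⟩ := hG.connected.exists_walk_length_eq_dist u v
    have hpath : (q₁.append q₂).IsPath := SimpleGraph.Walk.isPath_of_length_eq_dist _ <| by
      rw [SimpleGraph.Walk.length_append, hq₁, hq₂, hdist]
    rw [← (hG.existsUnique_path o v).unique hpath hp, SimpleGraph.Walk.mem_support_append_iff]
    exact Or.inl q₁.end_mem_support
  · intro hmem
    have hlen : (p.takeUntil u hmem).length + (p.dropUntil u hmem).length = G.dist o v := by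
      rw [← hl, ← SimpleGraph.Walk.length_append, p.take_spec hmem]
    have h₁ : G.dist o u ≤ (p.takeUntil u hmem).length := SimpleGraph.dist_le _
    have h₂ : G.dist u v ≤ (p.dropUntil u hmem).length := SimpleGraph.dist_le _
    have h₃ : G.dist o v ≤ G.dist o u + G.dist u v := hG.connected.dist_triangle
    omega

lemma card_pathE (hG : G.IsTree) (o v : V) : (pathE G o v).card = G.dist o v := by
  obtain ⟨p, hp, hl⟩ := hG.connected.exists_path_of_dist o v
  have hset : pathE G o v = p.support.toFinset.erase o := by
    ext u
    rw [mem_pathE_iff_mem_support hG p hp hl, mem_erase, List.mem_toFinset]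
  rw [hset, card_erase_of_mem (List.mem_toFinset.mpr p.start_mem_support),
    List.toFinset_card_of_nodup hp.support_nodup, SimpleGraph.Walk.length_support, hl]
  rfl

lemma pathE_subset_pathE (hG : G.IsTree) {o v w : V} (hw : w ∈ pathE G o v) :
    pathE G o w ⊆ pathE G o v := by
  intro u hu
  simp only [pathE, mem_filter, mem_univ, true_and] at hu hw ⊢
  have h₁ : G.dist o v ≤ G.dist o u + G.dist u v := hG.connected.dist_triangle
  have h₂ : G.dist u v ≤ G.dist u w + G.dist w v := hG.connected.dist_triangle
  exact ⟨hu.1, by omega⟩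

lemma pathE_subset_filter_ne (o v : V) : pathE G o v ⊆ univ.filter fun u => u ≠ o :=
  fun _ hu => mem_filter.mpr ⟨mem_univ _, (mem_filter.mp hu).2.1⟩

lemma mem_subT {o w v : V} : v ∈ subT G o w ↔ w ∈ pathE G o v := by
  simp [subT]

lemma sum_pathE_indicator_of_mem (hG : G.IsTree) {o v w : V} (hw : w ∈ pathE G o v) (c : ℝ) :
    ∑ u ∈ pathE G o v, (if u ∈ pathE G o w then c else 0) = G.dist o w * c := by
  rw [sum_ite_mem, inter_eq_right.mpr (pathE_subset_pathE hG hw), sum_const, card_pathE hG,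
    nsmul_eq_mul]

lemma sum_sq_pathE_indicator (hG : G.IsTree) (o w : V) (c : ℝ) :
    ∑ u ∈ univ.filter (fun u => u ≠ o), (if u ∈ pathE G o w then c else 0) ^ 2
      = G.dist o w * c ^ 2 := by
  simp_rw [ite_pow, zero_pow two_ne_zero]
  rw [sum_ite_mem, inter_eq_right.mpr (pathE_subset_filter_ne o w), sum_const, card_pathE hG,
    nsmul_eq_mul]

lemma card_subT_mul_le_sum_sq (hG : G.IsTree) (o w : V) (c : ℝ) :
    (subT G o w).card * (G.dist o w * c) ^ 2
      ≤ ∑ v, (∑ u ∈ pathE G o v, (if u ∈ pathE G o w then c else 0)) ^ 2 :=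
  calc (subT G o w).card * (G.dist o w * c) ^ 2
      = ∑ v ∈ subT G o w, (∑ u ∈ pathE G o v, (if u ∈ pathE G o w then c else 0)) ^ 2 := by
        rw [sum_congr rfl fun v hv => by
          rw [sum_pathE_indicator_of_mem hG (mem_subT.mp hv)], sum_const, nsmul_eq_mul]
    _ ≤ ∑ v, (∑ u ∈ pathE G o v, (if u ∈ pathE G o w then c else 0)) ^ 2 :=
        sum_le_sum_of_subset_of_nonneg (subset_univ _) fun _ _ _ => sq_nonneg _

end Tree

theorem hardy_constant_lower_bound_general {V : Type*} [Fintype V] [DecidableEq V]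
    (G : SimpleGraph V) (hG : G.IsTree) (o estar : V) (hestar : estar ≠ o) :
    (((subT G o estar).card : ℝ) ≤ ∑ v : V, (∑ u ∈ pathE G o v,
        (if u ∈ pathE G o estar then (1 : ℝ) / (G.dist o estar) else 0)) ^ 2) ∧
    (∑ u ∈ Finset.univ.filter fun u => u ≠ o,
        (if u ∈ pathE G o estar then (1 : ℝ) / (G.dist o estar) else 0) ^ 2
      = 1 / (G.dist o estar)) ∧
    ∀ A : ℝ, (∀ g : V → ℝ, ∑ v : V, (∑ u ∈ pathE G o v, g u) ^ 2 ≤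
        A * ∑ u ∈ Finset.univ.filter fun u => u ≠ o, (g u) ^ 2) →
      ((G.dist o estar * (subT G o estar).card : ℕ) : ℝ) ≤ A := by
  have hd : (0 : ℝ) < G.dist o estar := Nat.cast_pos.mpr <|
    hG.connected.pos_dist_of_ne hestar.symm
  have lhs := card_subT_mul_le_sum_sq hG o estar (1 / G.dist o estar)
  rw [mul_one_div_cancel hd.ne', one_pow, mul_one] at lhs
  have energy := sum_sq_pathE_indicator hG o estar (1 / G.dist o estar)
  rw [show (G.dist o estar : ℝ) * (1 / G.dist o estar) ^ 2 = 1 / G.dist o estar by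
    field_simp] at energy
  refine ⟨lhs, energy, fun A hA => ?_⟩
  have h := lhs.trans (hA _)
  rw [energy, ← div_eq_mul_one_div, le_div_iff₀ hd] at h
  push_cast
  linarith

/-- Lower bound on the Hardy constant: let `e*` (encoded by its far endpoint)
maximize `|e|·|T_e|` and let `g` be `1/|e*|` on the root-path of `e*` and `0`
elsewhere. Then `∑_v (∑_{e ∈ ℓ(v)} g(e))² ≥ |T_{e*}|`, `∑_e g(e)² = 1/|e*|`, and
any Hardy constant `A` satisfies `A ≥ max_e |e|·|T_e|`. -/
theorem hardy_constant_lower_bound {V : Type*} [Fintype V] [DecidableEq V]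
    (G : SimpleGraph V) (hG : G.IsTree) (o estar : V) (hestar : estar ≠ o)
    (hmax : ∀ u, u ≠ o →
      G.dist o u * (subT G o u).card ≤ G.dist o estar * (subT G o estar).card) :
    (((subT G o estar).card : ℝ) ≤ ∑ v : V, (∑ u ∈ pathE G o v,
        (if u ∈ pathE G o estar then (1 : ℝ) / (G.dist o estar) else 0)) ^ 2) ∧
    (∑ u ∈ Finset.univ.filter fun u => u ≠ o,
        (if u ∈ pathE G o estar then (1 : ℝ) / (G.dist o estar) else 0) ^ 2
      = 1 / (G.dist o estar)) ∧
    ∀ A : ℝ, (∀ g : V → ℝ, ∑ v : V, (∑ u ∈ pathE G o v, g u) ^ 2 ≤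
        A * ∑ u ∈ Finset.univ.filter fun u => u ≠ o, (g u) ^ 2) →
      ((G.dist o estar * (subT G o estar).card : ℕ) : ℝ) ≤ A :=
  hardy_constant_lower_bound_general G hG o estar hestar
end

section
/- Let G be a finite tree rooted at o, let S be the collection of nonempty vertex subsets not containing o, and for B ∈ S define ν_B = inf { ∑_{e∈E} f(e)² : f : E → ℝ, ∑_{e∈ℓ(v)} f(e) ≥ 1 for all v ∈ B }. Then for every g : E → ℝ, ∑_{v∈V} (∑_{e∈ℓ(v)} g(e))² ≤ 32 · (max_{B∈S} |B|/ν_B) · ∑_{e∈E} g(e)². -/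
open Finset

/-- `ν_B`: the infimum of `∑_e f(e)²` over `f : E → ℝ` with `∑_{e ∈ ℓ(v)} f(e) ≥ 1`
for every `v ∈ B` (edges encoded by their far endpoints). -/
noncomputable def nuB {V : Type*} [Fintype V] [DecidableEq V] (G : SimpleGraph V)
    (o : V) (B : Finset V) : ℝ :=
  sInf {r : ℝ | ∃ f : V → ℝ, (∀ v ∈ B, 1 ≤ ∑ u ∈ pathE G o v, f u) ∧
    r = ∑ u ∈ Finset.univ.filter fun u => u ≠ o, (f u) ^ 2}

/-!
For `g ≥ 0` put `h v = ∑_{e ∈ ℓ(v)} g e`, which increases along paths from `o`, and split the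
vertices with `h v > 0` into the dyadic levels `B_i = {2^i ≤ h < 2^(i+1)}`. On `B_i` the
restriction `f_i` of `g` to the vertices with `2^(i-1) ≤ h < 2^(i+1)` has path sums at least
`2^i - 2^(i-1)`: on a path to `v ∈ B_i` the vertices with `h < 2^(i-1)` form an initial
segment, carrying at most `2^(i-1)` of `h v`. Rescaling `f_i` gives a competitor for `ν_{B_i}`,
hence `∑_{B_i} h² ≤ 16 M ∑ f_i²` with `M = max_B |B| / ν_B`, and every vertex lies in at most two of the windows
`[2^(i-1), 2^(i+1))`.
-/

namespace SimpleGraph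

variable {V : Type*} {G : SimpleGraph V} {a b x : V}

lemma Walk.length_takeUntil_eq_dist [DecidableEq V] {p : G.Walk a b}
    (hp : p.length = G.dist a b) (hx : x ∈ p.support) :
    (p.takeUntil x hx).length = G.dist a x :=
  length_eq_dist_of_subwalk hp (p.isSubwalk_takeUntil hx)

lemma Walk.length_dropUntil_eq_dist [DecidableEq V] {p : G.Walk a b}
    (hp : p.length = G.dist a b) (hx : x ∈ p.support) :
    (p.dropUntil x hx).length = G.dist x b :=
  length_eq_dist_of_subwalk hp (p.isSubwalk_dropUntil hx)

lemma Walk.dist_add_dist_eq_of_mem_support [DecidableEq V] {p : G.Walk a b}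
    (hp : p.length = G.dist a b) (hx : x ∈ p.support) :
    G.dist a x + G.dist x b = G.dist a b := by
  rw [← p.length_takeUntil_eq_dist hp hx, ← p.length_dropUntil_eq_dist hp hx,
    ← Walk.length_append, p.take_spec hx, hp]

lemma IsTree.mem_support_of_dist_add_dist_eq (hG : G.IsTree) {p : G.Walk a b} (hp : p.IsPath)
    (hx : G.dist a x + G.dist x b = G.dist a b) : x ∈ p.support := by
  obtain ⟨p₁, -, h₁⟩ := hG.connected.exists_path_of_dist a x
  obtain ⟨p₂, -, h₂⟩ := hG.connected.exists_path_of_dist x b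
  have hpath : (p₁.append p₂).IsPath :=
    (p₁.append p₂).isPath_of_length_eq_dist (by rw [Walk.length_append, h₁, h₂, hx])
  have hp₁₂ : p₁.append p₂ = p :=
    congrArg Subtype.val ((hG.isAcyclic.subsingleton_path a b).elim ⟨_, hpath⟩ ⟨p, hp⟩)
  rw [← hp₁₂, Walk.mem_support_append_iff]
  exact Or.inl p₁.end_mem_support

/-- Two vertices on a geodesic from `o` are comparable: one lies on a geodesic from `o` to the
other. -/
lemma IsTree.dist_add_dist_eq_or_dist_add_dist_eq (hG : G.IsTree) {o u v w : V}
    (hu : G.dist o u + G.dist u v = G.dist o v) (hw : G.dist o w + G.dist w v = G.dist o v) :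
    G.dist o u + G.dist u w = G.dist o w ∨ G.dist o w + G.dist w u = G.dist o u := by
  classical
  obtain ⟨p, hp, hlen⟩ := hG.connected.exists_path_of_dist o v
  have hwp := hG.mem_support_of_dist_add_dist_eq hp hw
  have hup := hG.mem_support_of_dist_add_dist_eq hp hu
  rw [← p.take_spec hwp, Walk.mem_support_append_iff] at hup
  rcases hup with hup | hup
  · exact Or.inl (Walk.dist_add_dist_eq_of_mem_support (p.length_takeUntil_eq_dist hlen hwp) hup)
  · have := Walk.dist_add_dist_eq_of_mem_support (p.length_dropUntil_eq_dist hlen hwp) hup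
    right
    omega

end SimpleGraph

section Path

variable {V : Type*} [Fintype V] [DecidableEq V] {G : SimpleGraph V} {o u v w : V}

lemma mem_pathE : u ∈ pathE G o v ↔ u ≠ o ∧ G.dist o u + G.dist u v = G.dist o v := by
  simp [pathE]

lemma mem_pathE_self (hv : v ≠ o) : v ∈ pathE G o v := by
  simp [pathE, hv]

lemma pathE_root (hc : G.Connected) : pathE G o o = ∅ := by
  ext u
  simp only [mem_pathE, SimpleGraph.dist_self, Nat.add_eq_zero_iff, notMem_empty, iff_false]
  rintro ⟨hu, hou, -⟩
  exact hu (hc.dist_eq_zero_iff.1 hou).symm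

lemma pathE_subset_pathE_s9 (hc : G.Connected) (hu : u ∈ pathE G o v) :
    pathE G o u ⊆ pathE G o v := by
  intro w hw
  rw [mem_pathE] at hu hw ⊢
  have := hc.dist_triangle (u := o) (v := w) (w := v)
  have := hc.dist_triangle (u := w) (v := u) (w := v)
  exact ⟨hw.1, by omega⟩

lemma SimpleGraph.IsTree.mem_pathE_or_mem_pathE (hG : G.IsTree) (hu : u ∈ pathE G o v)
    (hw : w ∈ pathE G o v) : u ∈ pathE G o w ∨ w ∈ pathE G o u := by
  rw [mem_pathE] at hu hw
  exact (hG.dist_add_dist_eq_or_dist_add_dist_eq hu.2 hw.2).imp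
    (fun h => mem_pathE.2 ⟨hu.1, h⟩) (fun h => mem_pathE.2 ⟨hw.1, h⟩)

/-- The vertex of `A` farthest from `o` works. -/
lemma SimpleGraph.IsTree.exists_mem_subset_pathE (hG : G.IsTree) {A : Finset V}
    (hA : A ⊆ pathE G o v) (hne : A.Nonempty) : ∃ u ∈ A, A ⊆ pathE G o u := by
  obtain ⟨u, huA, hmax⟩ := A.exists_max_image (G.dist o) hne
  refine ⟨u, huA, fun x hx => ?_⟩
  rcases hG.mem_pathE_or_mem_pathE (hA hx) (hA huA) with hxu | hux
  · exact hxu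
  · have hdist := (mem_pathE.1 hux).2
    have hxu : u = x := hG.connected.dist_eq_zero_iff.1 (by have := hmax x hx; omega)
    exact hxu ▸ mem_pathE_self (mem_pathE.1 (hA huA)).1

end Path

section PathSum

variable {V : Type*} [Fintype V] [DecidableEq V] {G : SimpleGraph V} {o u v : V} {g : V → ℝ}

noncomputable def pathSum (G : SimpleGraph V) (o : V) (g : V → ℝ) (v : V) : ℝ :=
  ∑ u ∈ pathE G o v, g u

lemma pathSum_root (hc : G.Connected) : pathSum G o g o = 0 := by
  simp [pathSum, pathE_root hc]

lemma pathSum_nonneg (hg : 0 ≤ g) : 0 ≤ pathSum G o g v :=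
  sum_nonneg fun u _ => hg u

lemma pathSum_le_pathSum (hc : G.Connected) (hg : 0 ≤ g) (hu : u ∈ pathE G o v) :
    pathSum G o g u ≤ pathSum G o g v :=
  sum_le_sum_of_subset_of_nonneg (pathE_subset_pathE_s9 hc hu) fun w _ _ => hg w

lemma SimpleGraph.IsTree.sum_pathE_filter_pathSum_lt_le (hG : G.IsTree) (hg : 0 ≤ g) {t : ℝ}
    (ht : 0 ≤ t) : ∑ u ∈ (pathE G o v).filter (pathSum G o g · < t), g u ≤ t := by
  rcases ((pathE G o v).filter (pathSum G o g · < t)).eq_empty_or_nonempty with hA | hA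
  · simpa [hA] using ht
  obtain ⟨u, huA, hAu⟩ := hG.exists_mem_subset_pathE (filter_subset _ _) hA
  calc ∑ u ∈ (pathE G o v).filter (pathSum G o g · < t), g u
      ≤ pathSum G o g u := sum_le_sum_of_subset_of_nonneg hAu fun w _ _ => hg w
    _ ≤ t := (mem_filter.1 huA).2.le

lemma SimpleGraph.IsTree.sub_le_sum_pathE_ite (hG : G.IsTree) (hg : 0 ≤ g) {s t : ℝ}
    (hs : 0 ≤ s) (hv : pathSum G o g v < t) :
    pathSum G o g v - s ≤
      ∑ u ∈ pathE G o v, if s ≤ pathSum G o g u ∧ pathSum G o g u < t then g u else 0 := by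
  have hupper : ∀ u ∈ pathE G o v, pathSum G o g u < t :=
    fun u hu => (pathSum_le_pathSum hG.connected hg hu).trans_lt hv
  have hsum : (∑ u ∈ pathE G o v,
      if s ≤ pathSum G o g u ∧ pathSum G o g u < t then g u else 0) =
      ∑ u ∈ (pathE G o v).filter (s ≤ pathSum G o g ·), g u := by
    rw [sum_filter]
    exact sum_congr rfl fun u hu => by simp only [hupper u hu, and_true]
  have hsplit := sum_filter_add_sum_filter_not (pathE G o v) (s ≤ pathSum G o g ·) g
  simp only [not_le] at hsplit
  have hlow := hG.sum_pathE_filter_pathSum_lt_le (o := o) (v := v) hg hs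
  have hv : pathSum G o g v = ∑ u ∈ pathE G o v, g u := rfl
  linarith

end PathSum

section Capacity

variable {V : Type*} [Fintype V] [DecidableEq V] {G : SimpleGraph V} {o : V} {B : Finset V}

lemma nuB_nonneg : 0 ≤ nuB G o B :=
  Real.sInf_nonneg (by rintro _ ⟨f, -, rfl⟩; positivity)

lemma nuB_le {f : V → ℝ} (hf : ∀ v ∈ B, 1 ≤ ∑ u ∈ pathE G o v, f u) :
    nuB G o B ≤ ∑ u ∈ univ.filter fun u => u ≠ o, f u ^ 2 :=
  csInf_le ⟨0, by rintro _ ⟨f, -, rfl⟩; positivity⟩ ⟨f, hf, rfl⟩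

/-- By Cauchy–Schwarz along a single path, `ν_B ≥ 1 / |V|`. -/
lemma nuB_pos (hB : B.Nonempty) (hoB : o ∉ B) : 0 < nuB G o B := by
  obtain ⟨v, hv⟩ := hB
  have hcard : (0 : ℝ) < Fintype.card V := by
    have : Nonempty V := ⟨v⟩
    exact_mod_cast Fintype.card_pos
  refine (inv_pos.2 hcard).trans_le (le_csInf ?_ ?_)
  · refine ⟨_, fun _ => 1, fun w hw => ?_, rfl⟩
    have hw : w ∈ pathE G o w := mem_pathE_self fun h => hoB (h ▸ hw)
    simpa using card_pos.2 ⟨w, hw⟩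
  rintro _ ⟨f, hf, rfl⟩
  rw [inv_le_iff_one_le_mul₀' hcard]
  calc (1 : ℝ) ≤ (∑ u ∈ pathE G o v, f u) ^ 2 := one_le_pow₀ (hf v hv)
    _ ≤ (pathE G o v).card * ∑ u ∈ pathE G o v, f u ^ 2 := sq_sum_le_card_mul_sum_sq
    _ ≤ Fintype.card V * ∑ u ∈ univ.filter fun u => u ≠ o, f u ^ 2 := by
      gcongr
      · exact card_le_univ _
      · exact fun u hu => by simpa using (mem_pathE.1 hu).1

/-- Rescaled by `c⁻¹`, `f` is a competitor for `ν_B`. -/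
lemma card_mul_sq_le_of_le_sum_pathE (hB : B.Nonempty) (hoB : o ∉ B) {M c : ℝ}
    (hM : (B.card : ℝ) / nuB G o B ≤ M) (hc : 0 < c) {f : V → ℝ}
    (hf : ∀ v ∈ B, c ≤ ∑ u ∈ pathE G o v, f u) :
    B.card * c ^ 2 ≤ M * ∑ u ∈ univ.filter fun u => u ≠ o, f u ^ 2 := by
  have hν := nuB_pos (G := G) hB hoB
  have hM0 : 0 ≤ M := (div_nonneg (Nat.cast_nonneg _) hν.le).trans hM
  have hcard : (B.card : ℝ) ≤ M * nuB G o B := (div_le_iff₀ hν).1 hM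
  have hfeas : nuB G o B ≤ ∑ u ∈ univ.filter fun u => u ≠ o, (c⁻¹ * f u) ^ 2 :=
    nuB_le fun v hv => by
      rw [← mul_sum, le_inv_mul_iff₀ hc, mul_one]
      exact hf v hv
  calc B.card * c ^ 2 ≤ M * nuB G o B * c ^ 2 := by gcongr
    _ ≤ M * (∑ u ∈ univ.filter fun u => u ≠ o, (c⁻¹ * f u) ^ 2) * c ^ 2 := by gcongr
    _ = M * ∑ u ∈ univ.filter fun u => u ≠ o, f u ^ 2 := by
      simp_rw [mul_pow, ← mul_sum]
      field_simp

end Capacity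

section Dyadic

variable {α : Type*} [Fintype α] {h : α → ℝ} {i : ℤ}

noncomputable def dyadicLevel (h : α → ℝ) (i : ℤ) : Finset α :=
  univ.filter fun v => (2 : ℝ) ^ i ≤ h v ∧ h v < 2 ^ (i + 1)

noncomputable def dyadicIndices (h : α → ℝ) : Finset ℤ :=
  (univ.filter fun v => 0 < h v).image fun v => Int.log 2 (h v)

lemma mem_dyadicLevel_log {v : α} (hv : 0 < h v) : v ∈ dyadicLevel h (Int.log 2 (h v)) := by
  have hlow := Int.zpow_log_le_self (b := 2) one_lt_two hv
  have hhigh := Int.lt_zpow_succ_log_self (b := 2) one_lt_two (h v)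
  simp only [Nat.cast_ofNat] at hlow hhigh
  simp [dyadicLevel, hlow, hhigh]

lemma dyadicLevel_nonempty (hi : i ∈ dyadicIndices h) : (dyadicLevel h i).Nonempty := by
  obtain ⟨v, hv, rfl⟩ := mem_image.1 hi
  exact ⟨v, mem_dyadicLevel_log (mem_filter.1 hv).2⟩

lemma sum_sq_le_sum_card_dyadicLevel (hh : 0 ≤ h) :
    ∑ v, h v ^ 2 ≤ ∑ i ∈ dyadicIndices h, (dyadicLevel h i).card * ((2 : ℝ) ^ (i + 1)) ^ 2 := by
  have hzero : ∀ v ∈ univ, h v ^ 2 ≠ 0 → 0 < h v := fun v _ hv =>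
    (hh v).lt_of_ne' (by rintro h0; simp [h0] at hv)
  calc ∑ v, h v ^ 2 = ∑ v ∈ univ.filter fun v => 0 < h v, h v ^ 2 := (sum_filter_of_ne hzero).symm
    _ = ∑ i ∈ dyadicIndices h, ∑ v ∈ (univ.filter fun v => 0 < h v).filter
          (fun v => Int.log 2 (h v) = i), h v ^ 2 :=
      (sum_fiberwise_of_maps_to (fun v hv => mem_image_of_mem _ hv) _).symm
    _ ≤ ∑ i ∈ dyadicIndices h, ∑ v ∈ dyadicLevel h i, h v ^ 2 := by
      refine sum_le_sum fun i _ => sum_le_sum_of_subset_of_nonneg ?_ fun _ _ _ => sq_nonneg _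
      intro v hv
      obtain ⟨hpos, rfl⟩ := mem_filter.1 hv
      exact mem_dyadicLevel_log (mem_filter.1 hpos).2
    _ ≤ ∑ i ∈ dyadicIndices h, (dyadicLevel h i).card * ((2 : ℝ) ^ (i + 1)) ^ 2 := by
      refine sum_le_sum fun i _ => ?_
      rw [← nsmul_eq_mul]
      refine sum_le_card_nsmul _ _ _ fun v hv => ?_
      exact pow_le_pow_left₀ (hh v) (mem_filter.1 hv).2.2.le 2

end Dyadic

lemma card_filter_zpow_window_le_two (I : Finset ℤ) (x : ℝ) :
    (I.filter fun i => (2 : ℝ) ^ (i - 1) ≤ x ∧ x < 2 ^ (i + 1)).card ≤ 2 := by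
  refine (card_le_card (t := {Int.log 2 x, Int.log 2 x + 1}) fun i hi => ?_).trans card_le_two
  obtain ⟨-, hlow, hhigh⟩ := mem_filter.1 hi
  have hx : 0 < x := (zpow_pos two_pos _).trans_le hlow
  have h₁ := (Int.zpow_le_iff_le_log (b := 2) one_lt_two hx).1 (by exact_mod_cast hlow)
  have h₂ := (Int.lt_zpow_iff_log_lt (b := 2) one_lt_two hx).1 (by exact_mod_cast hhigh)
  simp only [mem_insert, mem_singleton]
  omega

lemma sum_sq_ite_zpow_window_le (I : Finset ℤ) (x y : ℝ) :
    ∑ i ∈ I, (if (2 : ℝ) ^ (i - 1) ≤ x ∧ x < 2 ^ (i + 1) then y else 0) ^ 2 ≤ 2 * y ^ 2 := by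
  simp only [ite_pow, ne_eq, OfNat.ofNat_ne_zero, not_false_eq_true, zero_pow]
  rw [← sum_filter, sum_const, nsmul_eq_mul]
  gcongr
  exact_mod_cast card_filter_zpow_window_le_two I x

section Hardy

variable {V : Type*} [Fintype V] [DecidableEq V] {G : SimpleGraph V} {o : V} {M : ℝ}
  {g : V → ℝ}

lemma SimpleGraph.IsTree.card_dyadicLevel_pathSum_mul_sq_le (hG : G.IsTree)
    (hM : ∀ B : Finset V, B.Nonempty → o ∉ B → (B.card : ℝ) / nuB G o B ≤ M) (hg : 0 ≤ g)
    {i : ℤ} (hi : i ∈ dyadicIndices (pathSum G o g)) :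
    ((dyadicLevel (pathSum G o g) i).card : ℝ) * ((2 : ℝ) ^ (i + 1)) ^ 2 ≤
      16 * M * ∑ u ∈ univ.filter fun u => u ≠ o,
        (if (2 : ℝ) ^ (i - 1) ≤ pathSum G o g u ∧ pathSum G o g u < 2 ^ (i + 1)
          then g u else 0) ^ 2 := by
  have hpow : (2 : ℝ) ^ i = 2 * 2 ^ (i - 1) := by
    rw [← zpow_one_add₀ two_ne_zero, add_sub_cancel]
  have hB := dyadicLevel_nonempty hi
  have hoB : o ∉ dyadicLevel (pathSum G o g) i := by
    simp [dyadicLevel, pathSum_root hG.connected, zpow_pos]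
  have hfeas : ∀ v ∈ dyadicLevel (pathSum G o g) i, (2 : ℝ) ^ (i - 1) ≤
      ∑ u ∈ pathE G o v, if (2 : ℝ) ^ (i - 1) ≤ pathSum G o g u ∧ pathSum G o g u < 2 ^ (i + 1)
        then g u else 0 := by
    intro v hv
    obtain ⟨hlow, hhigh⟩ := (mem_filter.1 hv).2
    have := hG.sub_le_sum_pathE_ite hg (zpow_pos two_pos (i - 1)).le hhigh
    linarith
  have := card_mul_sq_le_of_le_sum_pathE hB hoB (hM _ hB hoB) (zpow_pos two_pos _) hfeas
  have h16 : ((2 : ℝ) ^ (i + 1)) ^ 2 = 16 * ((2 : ℝ) ^ (i - 1)) ^ 2 := by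
    rw [zpow_add_one₀ two_ne_zero, hpow]
    ring
  rw [h16]
  linarith

lemma SimpleGraph.IsTree.sum_sq_pathSum_le_of_nonneg (hG : G.IsTree) (hM0 : 0 ≤ M)
    (hM : ∀ B : Finset V, B.Nonempty → o ∉ B → (B.card : ℝ) / nuB G o B ≤ M) (hg : 0 ≤ g) :
    ∑ v, pathSum G o g v ^ 2 ≤ 32 * M * ∑ u ∈ univ.filter fun u => u ≠ o, g u ^ 2 := by
  set h := pathSum G o g
  set f : ℤ → V → ℝ := fun i u => if (2 : ℝ) ^ (i - 1) ≤ h u ∧ h u < 2 ^ (i + 1) then g u else 0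
  calc ∑ v, h v ^ 2
      ≤ ∑ i ∈ dyadicIndices h, ((dyadicLevel h i).card : ℝ) * ((2 : ℝ) ^ (i + 1)) ^ 2 :=
        sum_sq_le_sum_card_dyadicLevel fun v => pathSum_nonneg hg
    _ ≤ ∑ i ∈ dyadicIndices h, 16 * M * ∑ u ∈ univ.filter fun u => u ≠ o, f i u ^ 2 :=
        sum_le_sum fun i hi => hG.card_dyadicLevel_pathSum_mul_sq_le hM hg hi
    _ = 16 * M * ∑ u ∈ univ.filter fun u => u ≠ o, ∑ i ∈ dyadicIndices h, f i u ^ 2 := by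
        rw [← mul_sum, sum_comm]
    _ ≤ 16 * M * ∑ u ∈ univ.filter fun u => u ≠ o, 2 * g u ^ 2 := by
        gcongr with u
        exact sum_sq_ite_zpow_window_le _ _ _
    _ = 32 * M * ∑ u ∈ univ.filter fun u => u ≠ o, g u ^ 2 := by
        rw [← mul_sum]
        ring

end Hardy

/-- Hardy inequality via capacities: for every `g : E → ℝ`,
`∑_v (∑_{e ∈ ℓ(v)} g(e))² ≤ 32 · (max_{B ∈ S} |B|/ν_B) · ∑_e g(e)²`, where `S` is
the collection of nonempty vertex sets avoiding the root `o`. -/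
theorem hardy_capacity_bound {V : Type*} [Fintype V] [DecidableEq V]
    (G : SimpleGraph V) (hG : G.IsTree) (o : V)
    (S : Finset (Finset V))
    (hS : S = Finset.univ.powerset.filter fun B => B.Nonempty ∧ o ∉ B)
    (hSne : S.Nonempty) (g : V → ℝ) :
    ∑ v : V, (∑ u ∈ pathE G o v, g u) ^ 2 ≤
      32 * (S.sup' hSne fun B => (B.card : ℝ) / nuB G o B) *
        ∑ u ∈ Finset.univ.filter fun u => u ≠ o, (g u) ^ 2 := by
  have hM : ∀ B : Finset V, B.Nonempty → o ∉ B →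
      (B.card : ℝ) / nuB G o B ≤ S.sup' hSne fun B => (B.card : ℝ) / nuB G o B :=
    fun B hB hoB => le_sup' (fun B => (B.card : ℝ) / nuB G o B) (by simp [hS, hB, hoB])
  have hM0 : 0 ≤ S.sup' hSne fun B => (B.card : ℝ) / nuB G o B :=
    hSne.elim fun B hB => (div_nonneg (Nat.cast_nonneg _) nuB_nonneg).trans
      (le_sup' (fun B => (B.card : ℝ) / nuB G o B) hB)
  calc ∑ v : V, (∑ u ∈ pathE G o v, g u) ^ 2 ≤ ∑ v, pathSum G o (fun u => |g u|) v ^ 2 :=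
        sum_le_sum fun v _ => by
          rw [← sq_abs]
          exact pow_le_pow_left₀ (abs_nonneg _) (abs_sum_le_sum_abs _ _) 2
    _ ≤ _ := hG.sum_sq_pathSum_le_of_nonneg hM0 hM fun u => abs_nonneg _
    _ = _ := by simp only [sq_abs]
end
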